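/- arXiv:2307.08592 — 3 statements merged into one kernel-verified Lean document; each statement's English description precedes it below -/
import Mathlib

section
/- The function f(x) = ln(x)/10 - ln(1/2 + x)/√x satisfies f'(x) ≤ 0 for all x in the open interval (0, 0.1). -/
open Real Set

theorem hasDerivAt_log_add_div_sqrt (a : ℝ) {x : ℝ} (hx : 0 < x) (hax : 0 < a + x) :
    HasDerivAt (fun y : ℝ => log (a + y) / √y)
      (1 / ((a + x) * √x) - log (a + x) / (2 * x * √x)) x := by
  have hlog : HasDerivAt (fun y : ℝ => log (a + y)) (1 / (a + x)) x := by
    simpa using ((hasDerivAt_id x).const_add a).log hax.ne'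
  have hs : √x ≠ 0 := (sqrt_pos.2 hx).ne'
  exact (hlog.div (hasDerivAt_sqrt hx.ne') hs).congr_deriv (by field_simp; rw [sq_sqrt hx.le])

/-- After multiplying by `2 x √x`, the positive part is `√x / 5 ≤ 1 / 10`, which
`log (1/2 + x) ≤ x - 1/2 ≤ -1/4` outweighs. -/
theorem inv_div_ten_sub_deriv_log_half_add_div_sqrt_nonpos {x : ℝ} (hx0 : 0 < x) (hx : x ≤ 1 / 4) :
    x⁻¹ / 10 - (1 / ((1 / 2 + x) * √x) - log (1 / 2 + x) / (2 * x * √x)) ≤ 0 := by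
  have hs : 0 < √x := sqrt_pos.2 hx0
  have hs_le : √x ≤ 1 / 2 := (sqrt_le_left (by norm_num)).2 (by linarith)
  have hlog : log (1 / 2 + x) ≤ x - 1 / 2 := by
    linarith [log_le_sub_one_of_pos (show 0 < 1 / 2 + x by positivity)]
  have hpos : 0 ≤ 1 / ((1 / 2 + x) * √x) := by positivity
  calc x⁻¹ / 10 - (1 / ((1 / 2 + x) * √x) - log (1 / 2 + x) / (2 * x * √x))
      ≤ x⁻¹ / 10 + log (1 / 2 + x) / (2 * x * √x) := by linarith
    _ = (√x / 5 + log (1 / 2 + x)) / (2 * x * √x) := by field_simp; ring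
    _ ≤ 0 := div_nonpos_of_nonpos_of_nonneg (by linarith) (by positivity)

theorem stmt_2 :
    ∀ x ∈ Set.Ioo (0:ℝ) 0.1,
      deriv (fun x : ℝ => Real.log x / 10 - Real.log (1/2 + x) / Real.sqrt x) x ≤ 0 := by
  rintro x ⟨hx0, hx1⟩
  have hf : HasDerivAt (fun x : ℝ => log x / 10 - log (1 / 2 + x) / √x) _ x :=
    ((hasDerivAt_log hx0.ne').div_const 10).sub
      (hasDerivAt_log_add_div_sqrt (1 / 2) hx0 (by positivity))
  rw [hf.deriv]
  exact inv_div_ten_sub_deriv_log_half_add_div_sqrt_nonpos hx0 (by norm_num at hx1; linarith)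
end

section
/- The function h(y) = ln(1 - y^10)/y^5 - ln(1 - y), defined for y ∈ (0, 0.1), is strictly increasing and tends to 0 as y → 0⁺; consequently h(y) > 0 on (0, 0.1). -/
/-!
The derivative is `-10y⁴/(1-y¹⁰) - 5 log(1-y¹⁰)/y⁶ + 1/(1-y)`: its middle term is nonnegative and
`10y⁴/(1-y¹⁰) < 1 < 1/(1-y)` for `0 < y < 0.1`. The limit comes from `|log(1-x)| ≤ x/(1-x)`, which
gives `|log(1-y¹⁰)/y⁵| ≤ y⁵/(1-y¹⁰)`. Positivity then holds because a strictly increasing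
function exceeds its right limit at the left endpoint.
-/

open Real Set Filter Topology

theorem StrictMonoOn.lt_of_tendsto_nhdsGT {α β : Type*} [LinearOrder α] [TopologicalSpace α]
    [OrderTopology α] [DenselyOrdered α] [LinearOrder β] [TopologicalSpace β]
    [OrderClosedTopology β] {f : α → β} {a b : α} {L : β} (hf : StrictMonoOn f (Ioo a b))
    (hL : Tendsto f (𝓝[>] a) (𝓝 L)) {y : α} (hy : y ∈ Ioo a b) : L < f y := by
  obtain ⟨z, haz, hzy⟩ := exists_between hy.1
  have hz : z ∈ Ioo a b := ⟨haz, hzy.trans hy.2⟩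
  have := nhdsGT_neBot_of_exists_gt ⟨z, haz⟩
  have hLz : L ≤ f z := le_of_tendsto hL <| by
    filter_upwards [Ioo_mem_nhdsGT haz] with w hw
    exact (hf ⟨hw.1, hw.2.trans hz.2⟩ hz hw.2).le
  exact hLz.trans_lt (hf hz hy hzy)

theorem abs_log_one_sub_le {x : ℝ} (hx : |x| < 1) : |log (1 - x)| ≤ |x| / (1 - |x|) := by
  simpa using abs_log_sub_add_sum_range_le hx 0

theorem tendsto_log_one_sub_pow_div_pow {m n : ℕ} (hnm : n < m) :
    Tendsto (fun y : ℝ => log (1 - y ^ m) / y ^ n) (𝓝[>] 0) (𝓝 0) := by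
  have hbound : Tendsto (fun y : ℝ => y ^ (m - n) / (1 - y ^ m)) (𝓝[>] 0) (𝓝 0) := by
    apply tendsto_nhdsWithin_of_tendsto_nhds
    have hc : ContinuousAt (fun y : ℝ => y ^ (m - n) / (1 - y ^ m)) 0 :=
      ContinuousAt.div (by fun_prop) (by fun_prop) (by simp [(Nat.zero_lt_of_lt hnm).ne'])
    simpa [(Nat.sub_pos_of_lt hnm).ne'] using hc.tendsto
  refine squeeze_zero_norm' ?_ hbound
  filter_upwards [Ioo_mem_nhdsGT one_pos] with y ⟨hy0, hy1⟩
  have hym : y ^ m < 1 := pow_lt_one₀ hy0.le hy1 (Nat.zero_lt_of_lt hnm).ne'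
  have hym0 : |y ^ m| = y ^ m := abs_of_nonneg (by positivity)
  have hlog := abs_log_one_sub_le (x := y ^ m) (by rwa [hym0])
  rw [hym0] at hlog
  rw [Real.norm_eq_abs, abs_div, abs_of_pos (pow_pos hy0 n), div_le_iff₀ (pow_pos hy0 n),
    div_mul_eq_mul_div, ← pow_add, Nat.sub_add_cancel hnm.le]
  exact hlog

theorem hasDerivAt_log_one_sub_pow_div_pow_sub_log {y : ℝ} (hy : y ≠ 0) (hy10 : 1 - y ^ 10 ≠ 0)
    (hy1 : 1 - y ≠ 0) :
    HasDerivAt (fun y : ℝ => log (1 - y ^ 10) / y ^ 5 - log (1 - y))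
      (-(10 * y ^ 4) / (1 - y ^ 10) - 5 * log (1 - y ^ 10) / y ^ 6 + 1 / (1 - y)) y := by
  have hnum : HasDerivAt (fun y : ℝ => log (1 - y ^ 10)) (-(10 * y ^ 9) / (1 - y ^ 10)) y := by
    simpa using ((hasDerivAt_pow 10 y).const_sub 1).log hy10
  have hden : HasDerivAt (fun y : ℝ => y ^ 5) (5 * y ^ 4) y := by simpa using hasDerivAt_pow 5 y
  have hlog : HasDerivAt (fun y : ℝ => log (1 - y)) (-1 / (1 - y)) y := by
    simpa using ((hasDerivAt_id y).const_sub 1).log hy1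
  refine ((hnum.div hden (pow_ne_zero 5 hy)).sub hlog).congr_deriv ?_
  field_simp
  ring

theorem log_one_sub_pow_div_pow_sub_log_deriv_pos {y : ℝ} (hy : y ∈ Ioo (0 : ℝ) 0.1) :
    0 < -(10 * y ^ 4) / (1 - y ^ 10) - 5 * log (1 - y ^ 10) / y ^ 6 + 1 / (1 - y) := by
  obtain ⟨hy0, hy1⟩ := hy
  have hy4 : 10 * y ^ 4 < 1 / 2 := by nlinarith [pow_lt_pow_left₀ hy1 hy0.le (by norm_num : 4 ≠ 0)]
  have hy10 : y ^ 10 < 1 / 2 := by nlinarith [pow_lt_pow_left₀ hy1 hy0.le (by norm_num : 10 ≠ 0)]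
  have hlog : log (1 - y ^ 10) ≤ 0 := log_nonpos (by linarith) (by linarith [pow_pos hy0 10])
  have hquot : 10 * y ^ 4 / (1 - y ^ 10) < 1 / (1 - y) := by
    rw [div_lt_div_iff₀ (by linarith) (by norm_num at hy1 ⊢; linarith)]
    nlinarith [pow_pos hy0 4]
  have hmid : 0 ≤ -(5 * log (1 - y ^ 10) / y ^ 6) :=
    neg_nonneg.mpr (div_nonpos_of_nonpos_of_nonneg (by linarith) (by positivity))
  rw [neg_div]
  linarith

theorem strictMonoOn_log_one_sub_pow_div_pow_sub_log :
    StrictMonoOn (fun y : ℝ => log (1 - y ^ 10) / y ^ 5 - log (1 - y)) (Ioo 0 0.1) := by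
  have hderiv : ∀ y ∈ Ioo (0 : ℝ) 0.1,
      HasDerivAt (fun y : ℝ => log (1 - y ^ 10) / y ^ 5 - log (1 - y))
        (-(10 * y ^ 4) / (1 - y ^ 10) - 5 * log (1 - y ^ 10) / y ^ 6 + 1 / (1 - y)) y := by
    rintro y ⟨hy0, hy1⟩
    have hy1' : y < 1 := hy1.trans (by norm_num)
    exact hasDerivAt_log_one_sub_pow_div_pow_sub_log hy0.ne'
      (sub_ne_zero.mpr (pow_lt_one₀ hy0.le hy1' (by norm_num)).ne') (sub_ne_zero.mpr hy1'.ne')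
  refine strictMonoOn_of_deriv_pos (convex_Ioo 0 0.1)
    (fun y hy => (hderiv y hy).continuousAt.continuousWithinAt) fun y hy => ?_
  rw [interior_Ioo] at hy
  rw [(hderiv y hy).deriv]
  exact log_one_sub_pow_div_pow_sub_log_deriv_pos hy

theorem stmt_3 :
    StrictMonoOn (fun y : ℝ => Real.log (1 - y^10) / y^5 - Real.log (1 - y)) (Set.Ioo 0 0.1) ∧
    Filter.Tendsto (fun y : ℝ => Real.log (1 - y^10) / y^5 - Real.log (1 - y))
      (nhdsWithin 0 (Set.Ioi 0)) (nhds 0) ∧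
    ∀ y ∈ Set.Ioo (0:ℝ) 0.1, 0 < Real.log (1 - y^10) / y^5 - Real.log (1 - y) := by
  have hmono := strictMonoOn_log_one_sub_pow_div_pow_sub_log
  have hlog : Tendsto (fun y : ℝ => log (1 - y)) (𝓝[>] 0) (𝓝 0) := by
    have hc : ContinuousAt (fun y : ℝ => log (1 - y)) 0 :=
      (continuousAt_const.sub continuousAt_id).log (by norm_num)
    simpa using tendsto_nhdsWithin_of_tendsto_nhds hc.tendsto
  have hlim : Tendsto (fun y : ℝ => log (1 - y ^ 10) / y ^ 5 - log (1 - y)) (𝓝[>] 0) (𝓝 0) := by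
    simpa using (tendsto_log_one_sub_pow_div_pow (by norm_num : 5 < 10)).sub hlog
  exact ⟨hmono, hlim, fun y hy => hmono.lt_of_tendsto_nhdsGT hlim hy⟩
end

section
/- Let k ≥ 1 and let G = (L, R, E) be a bipartite graph. Set weights w(ℓ) = 4k² + 2k for ℓ ∈ L, w(r) = 4k² + 1 for r ∈ R, budget B = 8k³ + 2k² + k, and let H be the bipartite complement of G. Then G contains a balanced biclique K_{k,k} if and only if there exists an independent set S in H with total weight w(S) exactly B. -/
/-!
Since `¬¬E ↔ E`, an independent set of `H` is exactly a biclique of `G`, so the statement reduces to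
arithmetic: the weight equation forces `|SL| = |SR| = k`. With `N = 4k² + 1` and `s = 2k - 1` it reads
`|SL|·s + N·(|SL| + |SR|) = k·s + N·2k`; the weight bound gives `|SL| ≤ s`, so both `|SL|·s` and `k·s`
are below `N`, and comparing base-`N` digits yields `|SL|·s = k·s` and `|SL| + |SR| = 2k`.
-/

theorem Nat.eq_and_eq_of_add_mul_eq {n c₁ c₂ d₁ d₂ : ℕ} (h₁ : c₁ < n) (h₂ : c₂ < n)
    (h : c₁ + n * d₁ = c₂ + n * d₂) : c₁ = c₂ ∧ d₁ = d₂ := by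
  have hn : 0 < n := by omega
  obtain ⟨hd₁, hc₁⟩ := (Nat.div_mod_unique hn).2 ⟨h, h₁⟩
  obtain ⟨hd₂, hc₂⟩ := (Nat.div_mod_unique hn).2 ⟨rfl, h₂⟩
  exact ⟨hc₁.symm.trans hc₂, hd₁.symm.trans hd₂⟩

theorem weight_eq_budget_iff {k a b : ℕ} (hk : 1 ≤ k) :
    a * (4 * k ^ 2 + 2 * k) + b * (4 * k ^ 2 + 1) = 8 * k ^ 3 + 2 * k ^ 2 + k ↔
      a = k ∧ b = k := by
  refine ⟨fun h => ?_, by rintro ⟨rfl, rfl⟩; ring⟩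
  obtain ⟨s, hs⟩ : ∃ s, 2 * k = s + 1 := ⟨2 * k - 1, by omega⟩
  have ha : a < 2 * k := by
    by_contra! ha
    nlinarith
  have hdigits : a * s + (4 * k ^ 2 + 1) * (a + b) = k * s + (4 * k ^ 2 + 1) * (2 * k) := by
    zify at h hs ⊢
    linear_combination h + (k - a) * hs
  obtain ⟨hks, hab⟩ := Nat.eq_and_eq_of_add_mul_eq (by nlinarith) (by nlinarith) hdigits
  have hak : a = k := Nat.eq_of_mul_eq_mul_right (by omega) hks
  omega

theorem stmt_12_general {L R : Type*}
    (E : L → R → Prop) (k : ℕ) (hk : 1 ≤ k) :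
    (∃ (L' : Finset L) (R' : Finset R),
        L'.card = k ∧ R'.card = k ∧ ∀ ℓ ∈ L', ∀ r ∈ R', E ℓ r) ↔
    (∃ (SL : Finset L) (SR : Finset R),
        (∀ ℓ ∈ SL, ∀ r ∈ SR, ¬ ¬ E ℓ r) ∧
        SL.card * (4 * k^2 + 2 * k) + SR.card * (4 * k^2 + 1)
          = 8 * k^3 + 2 * k^2 + k) := by
  simp only [not_not, weight_eq_budget_iff hk]
  exact exists₂_congr fun _ _ => by tauto

theorem stmt_12 {L R : Type*} [Fintype L] [Fintype R] [DecidableEq L] [DecidableEq R]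
    (E : L → R → Prop) (k : ℕ) (hk : 1 ≤ k) :
    (∃ (L' : Finset L) (R' : Finset R),
        L'.card = k ∧ R'.card = k ∧ ∀ ℓ ∈ L', ∀ r ∈ R', E ℓ r) ↔
    (∃ (SL : Finset L) (SR : Finset R),
        (∀ ℓ ∈ SL, ∀ r ∈ SR, ¬ ¬ E ℓ r) ∧
        SL.card * (4 * k^2 + 2 * k) + SR.card * (4 * k^2 + 1)
          = 8 * k^3 + 2 * k^2 + k) :=
  stmt_12_general E k hk
end
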